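/- Let φ be an LTL formula and FG ψ a basis formula in B_FG(φ). For every C ⊆ ⇓ψ: (1) eval(ψ,C) ∈ Π₁, hence FG(eval(ψ,C)) ∈ Δ₂; (2) FG ψ and FG(eval(ψ,C)) are equivalent under context ⟨C,⇓ψ⟩; (3) if C ⊆ C' ⊆ ⇓ψ then FG(eval(ψ,C)) ⊨ FG(eval(ψ,C')). -/

import Mathlib

namespace LTLNorm

/-- LTL formulas in negation normal form. -/
inductive F (Ap : Type) : Type
  | tt    : F Ap
  | ff    : F Ap
  | pos   : Ap → F Ap
  | nlit  : Ap → F Ap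
  | and   : F Ap → F Ap → F Ap
  | or    : F Ap → F Ap → F Ap
  | next  : F Ap → F Ap
  | untl  : F Ap → F Ap → F Ap
  | wuntl : F Ap → F Ap → F Ap
  | rel   : F Ap → F Ap → F Ap
  | srel  : F Ap → F Ap → F Ap
  deriving DecidableEq

/-- Infinite words over the alphabet `2^Ap`. -/
abbrev Word (Ap : Type) := ℕ → Set Ap

/-- Suffix of a word starting at position `i`. -/
def suff {Ap : Type} (w : Word Ap) (i : ℕ) : Word Ap := fun n => w (n + i)

/-- Satisfaction relation. -/
def Sat {Ap : Type} : Word Ap → F Ap → Prop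
  | _, F.tt => True
  | _, F.ff => False
  | w, F.pos a => a ∈ w 0
  | w, F.nlit a => a ∉ w 0
  | w, F.and φ ψ => Sat w φ ∧ Sat w ψ
  | w, F.or φ ψ => Sat w φ ∨ Sat w ψ
  | w, F.next φ => Sat (suff w 1) φ
  | w, F.untl φ ψ => ∃ k, Sat (suff w k) ψ ∧ ∀ j < k, Sat (suff w j) φ
  | w, F.wuntl φ ψ => (∀ k, Sat (suff w k) φ) ∨ ∃ k, Sat (suff w k) ψ ∧ ∀ j < k, Sat (suff w j) φ
  | w, F.srel φ ψ => ∃ k, Sat (suff w k) φ ∧ ∀ j ≤ k, Sat (suff w j) ψ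
  | w, F.rel φ ψ => (∀ k, Sat (suff w k) ψ) ∨ ∃ k, Sat (suff w k) φ ∧ ∀ j ≤ k, Sat (suff w j) ψ

/-- Equivalence of formulas. -/
def Equiv {Ap : Type} (φ ψ : F Ap) : Prop := ∀ w : Word Ap, Sat w φ ↔ Sat w ψ

/-- Entailment: every word satisfying `φ` satisfies `ψ`. -/
def Entails {Ap : Type} (φ ψ : F Ap) : Prop := ∀ w : Word Ap, Sat w φ → Sat w ψ

/-- F φ := tt U φ -/
def Ff {Ap : Type} (φ : F Ap) : F Ap := F.untl F.tt φ
/-- G φ := φ W ff -/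
def Gf {Ap : Type} (φ : F Ap) : F Ap := F.wuntl φ F.ff
/-- GF φ := G (F φ) -/
def GFf {Ap : Type} (φ : F Ap) : F Ap := Gf (Ff φ)
/-- FG φ := F (G φ) -/
def FGf {Ap : Type} (φ : F Ap) : F Ap := Ff (Gf φ)

/-- Number of nodes of the syntax tree. -/
def size {Ap : Type} : F Ap → ℕ
  | F.tt => 1
  | F.ff => 1
  | F.pos _ => 1
  | F.nlit _ => 1
  | F.and φ ψ => size φ + size ψ + 1
  | F.or φ ψ => size φ + size ψ + 1
  | F.next φ => size φ + 1
  | F.untl φ ψ => size φ + size ψ + 1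
  | F.wuntl φ ψ => size φ + size ψ + 1
  | F.rel φ ψ => size φ + size ψ + 1
  | F.srel φ ψ => size φ + size ψ + 1

/-- The dual of a formula in negation normal form. -/
def dual {Ap : Type} : F Ap → F Ap
  | F.tt => F.ff
  | F.ff => F.tt
  | F.pos a => F.nlit a
  | F.nlit a => F.pos a
  | F.and φ ψ => F.or (dual φ) (dual ψ)
  | F.or φ ψ => F.and (dual φ) (dual ψ)
  | F.next φ => F.next (dual φ)
  | F.untl φ ψ => F.rel (dual φ) (dual ψ)
  | F.rel φ ψ => F.untl (dual φ) (dual ψ)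
  | F.wuntl φ ψ => F.srel (dual φ) (dual ψ)
  | F.srel φ ψ => F.wuntl (dual φ) (dual ψ)

mutual
/-- The class Σ_i of the syntactic future hierarchy. -/
inductive SigmaC (Ap : Type) : ℕ → F Ap → Prop where
  | tt (i : ℕ) : SigmaC Ap i F.tt
  | ff (i : ℕ) : SigmaC Ap i F.ff
  | pos (i : ℕ) (a : Ap) : SigmaC Ap i (F.pos a)
  | nlit (i : ℕ) (a : Ap) : SigmaC Ap i (F.nlit a)
  | and {i : ℕ} {φ ψ : F Ap} : SigmaC Ap i φ → SigmaC Ap i ψ → SigmaC Ap i (F.and φ ψ)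
  | or {i : ℕ} {φ ψ : F Ap} : SigmaC Ap i φ → SigmaC Ap i ψ → SigmaC Ap i (F.or φ ψ)
  | ofPi {i : ℕ} {φ : F Ap} : PiC Ap i φ → SigmaC Ap (i + 1) φ
  | next {i : ℕ} {φ : F Ap} : SigmaC Ap (i + 1) φ → SigmaC Ap (i + 1) (F.next φ)
  | untl {i : ℕ} {φ ψ : F Ap} :
      SigmaC Ap (i + 1) φ → SigmaC Ap (i + 1) ψ → SigmaC Ap (i + 1) (F.untl φ ψ)
  | srel {i : ℕ} {φ ψ : F Ap} :
      SigmaC Ap (i + 1) φ → SigmaC Ap (i + 1) ψ → SigmaC Ap (i + 1) (F.srel φ ψ)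

/-- The class Π_i of the syntactic future hierarchy. -/
inductive PiC (Ap : Type) : ℕ → F Ap → Prop where
  | tt (i : ℕ) : PiC Ap i F.tt
  | ff (i : ℕ) : PiC Ap i F.ff
  | pos (i : ℕ) (a : Ap) : PiC Ap i (F.pos a)
  | nlit (i : ℕ) (a : Ap) : PiC Ap i (F.nlit a)
  | and {i : ℕ} {φ ψ : F Ap} : PiC Ap i φ → PiC Ap i ψ → PiC Ap i (F.and φ ψ)
  | or {i : ℕ} {φ ψ : F Ap} : PiC Ap i φ → PiC Ap i ψ → PiC Ap i (F.or φ ψ)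
  | ofSigma {i : ℕ} {φ : F Ap} : SigmaC Ap i φ → PiC Ap (i + 1) φ
  | next {i : ℕ} {φ : F Ap} : PiC Ap (i + 1) φ → PiC Ap (i + 1) (F.next φ)
  | rel {i : ℕ} {φ ψ : F Ap} :
      PiC Ap (i + 1) φ → PiC Ap (i + 1) ψ → PiC Ap (i + 1) (F.rel φ ψ)
  | wuntl {i : ℕ} {φ ψ : F Ap} :
      PiC Ap (i + 1) φ → PiC Ap (i + 1) ψ → PiC Ap (i + 1) (F.wuntl φ ψ)
end

/-- The class Δ_i of the syntactic future hierarchy. -/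
inductive DeltaC (Ap : Type) : ℕ → F Ap → Prop where
  | ofSigma {i : ℕ} {φ : F Ap} : SigmaC Ap i φ → DeltaC Ap i φ
  | ofPi {i : ℕ} {φ : F Ap} : PiC Ap i φ → DeltaC Ap i φ
  | and {i : ℕ} {φ ψ : F Ap} : DeltaC Ap i φ → DeltaC Ap i ψ → DeltaC Ap i (F.and φ ψ)
  | or {i : ℕ} {φ ψ : F Ap} : DeltaC Ap i φ → DeltaC Ap i ψ → DeltaC Ap i (F.or φ ψ)

/-- `LangC B C` is the set of words satisfying every formula of `C` and
no formula of `B \ C` (the language of the context `⟨C,B⟩`). -/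
def LangC {Ap : Type} (B C : Finset (F Ap)) : Set (Word Ap) :=
  {w | (∀ ψ ∈ C, Sat w ψ) ∧ ∀ ψ ∈ B, ψ ∉ C → ¬ Sat w ψ}

/-- Equivalence under the context `⟨C,B⟩`. -/
def EquivUnder {Ap : Type} (B C : Finset (F Ap)) (φ₁ φ₂ : F Ap) : Prop :=
  ∀ w ∈ LangC B C, (Sat w φ₁ ↔ Sat w φ₂)

/-- Disjunction of a list of formulas. -/
def bigOr {Ap : Type} (l : List (F Ap)) : F Ap := l.foldr F.or F.ff

/-- Conjunction of a list of formulas. -/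
def bigAnd {Ap : Type} (l : List (F Ap)) : F Ap := l.foldr F.and F.tt

variable {Ap : Type} [DecidableEq Ap]

/-- The set of subformulas of a formula. -/
def sf : F Ap → Finset (F Ap)
  | F.tt => {F.tt}
  | F.ff => {F.ff}
  | F.pos a => {F.pos a}
  | F.nlit a => {F.nlit a}
  | F.and φ ψ => insert (F.and φ ψ) (sf φ ∪ sf ψ)
  | F.or φ ψ => insert (F.or φ ψ) (sf φ ∪ sf ψ)
  | F.next φ => insert (F.next φ) (sf φ)
  | F.untl φ ψ => insert (F.untl φ ψ) (sf φ ∪ sf ψ)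
  | F.wuntl φ ψ => insert (F.wuntl φ ψ) (sf φ ∪ sf ψ)
  | F.rel φ ψ => insert (F.rel φ ψ) (sf φ ∪ sf ψ)
  | F.srel φ ψ => insert (F.srel φ ψ) (sf φ ∪ sf ψ)

/-- `B_GF(φ) = { GF ψ : χ U ψ or ψ M χ is a subformula of φ }`. -/
def BGF (φ : F Ap) : Finset (F Ap) :=
  (sf φ).biUnion fun σ =>
    match σ with
    | F.untl _ ψ => {GFf ψ}
    | F.srel ψ _ => {GFf ψ}
    | _ => ∅

/-- `B_FG(φ) = { FG ψ : χ W ψ or ψ R χ is a subformula of φ }`. -/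
def BFG (φ : F Ap) : Finset (F Ap) :=
  (sf φ).biUnion fun σ =>
    match σ with
    | F.wuntl _ ψ => {FGf ψ}
    | F.rel ψ _ => {FGf ψ}
    | _ => ∅

/-- The basis `B(φ) = B_GF(φ) ∪ B_FG(φ)`. -/
def Bset (φ : F Ap) : Finset (F Ap) := BGF φ ∪ BFG φ

/-- The argument of a basis formula: `GF ψ ↦ ψ` and `FG ψ ↦ ψ`. -/
def innerArg : F Ap → F Ap
  | F.wuntl (F.untl F.tt ψ) F.ff => ψ      -- GF ψ
  | F.untl F.tt (F.wuntl ψ F.ff) => ψ      -- FG ψ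
  | φ => φ

/-- `⇓ψ`: the basis formulas of `B(φ0)` strictly below `op(ψ)` in the order `≺`,
i.e. those whose argument is a subformula of `ψ`. -/
def down (φ0 ψ : F Ap) : Finset (F Ap) :=
  (Bset φ0).filter fun χ => innerArg χ ∈ sf ψ

/-- The formula `eval(ψ, C)`. -/
def eval (C : Finset (F Ap)) : F Ap → F Ap
  | F.tt => F.tt
  | F.ff => F.ff
  | F.pos a => F.pos a
  | F.nlit a => F.nlit a
  | F.and φ ψ => F.and (eval C φ) (eval C ψ)
  | F.or φ ψ => F.or (eval C φ) (eval C ψ)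
  | F.next φ => F.next (eval C φ)
  | F.wuntl φ ψ => F.wuntl (eval C φ) (eval C ψ)
  | F.rel φ ψ => F.rel (eval C φ) (eval C ψ)
  | F.untl φ ψ => if GFf ψ ∈ C then F.wuntl (eval C φ) (eval C ψ) else F.ff
  | F.srel φ ψ => if GFf φ ∈ C then F.rel (eval C φ) (eval C ψ) else F.ff

/-!
On a word of `L(C | ⇓ψ)` there is a position `N` after which every `b` with `GF b ∈ ⇓ψ \ C`
is false, while every `b` with `GF b ∈ C` still recurs. From `N` on, `χ U b` is therefore
either equivalent to `χ W b` (when `b` recurs) or false, and likewise for `M`; so `ψ` and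
`eval(ψ, C)` agree on every suffix beyond `N`, which is exactly what `FG` observes.
-/

open Filter

lemma suff_suff {Ap : Type} (w : Word Ap) (i k : ℕ) :
    suff (suff w i) k = suff w (k + i) := by
  funext n; simp only [suff, Nat.add_assoc]

lemma sat_Ff {Ap : Type} (w : Word Ap) (χ : F Ap) :
    Sat w (Ff χ) ↔ ∃ k, Sat (suff w k) χ := by
  simp only [Ff, Sat, implies_true, and_true]

lemma sat_Gf {Ap : Type} (w : Word Ap) (χ : F Ap) :
    Sat w (Gf χ) ↔ ∀ k, Sat (suff w k) χ := by
  simp only [Gf, Sat, false_and, exists_false, or_false]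

lemma sat_FGf_iff_eventually {Ap : Type} (w : Word Ap) (χ : F Ap) :
    Sat w (FGf χ) ↔ ∀ᶠ i in atTop, Sat (suff w i) χ := by
  simp only [FGf, sat_Ff, sat_Gf, suff_suff, eventually_atTop]
  constructor
  · rintro ⟨k, hk⟩
    exact ⟨k, fun i hi => Nat.sub_add_cancel hi ▸ hk (i - k)⟩
  · rintro ⟨k, hk⟩
    exact ⟨k, fun i => hk (i + k) (Nat.le_add_left k i)⟩

lemma sat_GFf_iff_frequently {Ap : Type} (w : Word Ap) (χ : F Ap) :
    Sat w (GFf χ) ↔ ∃ᶠ i in atTop, Sat (suff w i) χ := by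
  simp only [GFf, sat_Ff, sat_Gf, suff_suff, frequently_atTop]
  constructor
  · intro h k
    obtain ⟨i, hi⟩ := h k
    exact ⟨i + k, Nat.le_add_left k i, hi⟩
  · intro h k
    obtain ⟨i, hik, hi⟩ := h k
    exact ⟨i - k, (Nat.sub_add_cancel hik).symm ▸ hi⟩

lemma sat_untl_iff_wuntl {Ap : Type} {w : Word Ap} {a b : F Ap} (hb : Sat w (Ff b)) :
    Sat w (F.untl a b) ↔ Sat w (F.wuntl a b) := by
  refine ⟨Or.inr, ?_⟩
  rintro (ha | hab)
  · obtain ⟨k, hk⟩ := (sat_Ff w b).1 hb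
    exact ⟨k, hk, fun j _ => ha j⟩
  · exact hab

lemma sat_srel_iff_rel {Ap : Type} {w : Word Ap} {a b : F Ap} (ha : Sat w (Ff a)) :
    Sat w (F.srel a b) ↔ Sat w (F.rel a b) := by
  refine ⟨Or.inr, ?_⟩
  rintro (hb | hab)
  · obtain ⟨k, hk⟩ := (sat_Ff w a).1 ha
    exact ⟨k, hk, fun j _ => hb j⟩
  · exact hab

lemma Entails.FGf {Ap : Type} {φ ψ : F Ap} (h : Entails φ ψ) : Entails (FGf φ) (FGf ψ) := by
  intro w hw
  rw [sat_FGf_iff_eventually] at hw ⊢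
  exact hw.mono fun i => h _

lemma Entails.wuntl {Ap : Type} {a a' b b' : F Ap} (ha : Entails a a') (hb : Entails b b') :
    Entails (F.wuntl a b) (F.wuntl a' b') := fun _ =>
  Or.imp (forall_imp fun _ => ha _)
    (Exists.imp fun _ => And.imp (hb _) (forall₂_imp fun _ _ => ha _))

lemma Entails.rel {Ap : Type} {a a' b b' : F Ap} (ha : Entails a a') (hb : Entails b b') :
    Entails (F.rel a b) (F.rel a' b') := fun _ =>
  Or.imp (forall_imp fun _ => hb _)
    (Exists.imp fun _ => And.imp (ha _) (forall₂_imp fun _ _ => hb _))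

lemma FGf_deltaC_two {Ap : Type} {χ : F Ap} (h : PiC Ap 1 χ) : DeltaC Ap 2 (FGf χ) :=
  DeltaC.ofSigma (SigmaC.untl (SigmaC.tt 2) (SigmaC.ofPi (PiC.wuntl h (PiC.ff 1))))

lemma mem_sf_self (χ : F Ap) : χ ∈ sf χ := by
  cases χ <;> simp [sf]

lemma sf_trans {α β γ : F Ap} (h1 : α ∈ sf β) (h2 : β ∈ sf γ) : α ∈ sf γ := by
  induction γ with
  | tt | ff | pos | nlit => simp only [sf, Finset.mem_singleton] at h2; exact h2 ▸ h1
  | next a iha =>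
    simp only [sf, Finset.mem_insert] at h2 ⊢
    rcases h2 with rfl | h2
    · simpa only [sf, Finset.mem_insert] using h1
    · exact Or.inr (iha h2)
  | and a b iha ihb | or a b iha ihb | untl a b iha ihb | wuntl a b iha ihb
  | rel a b iha ihb | srel a b iha ihb =>
    simp only [sf, Finset.mem_insert, Finset.mem_union] at h2 ⊢
    rcases h2 with rfl | h2 | h2
    · simpa only [sf, Finset.mem_insert, Finset.mem_union] using h1
    · exact Or.inr (Or.inl (iha h2))
    · exact Or.inr (Or.inr (ihb h2))

lemma BGF_subset_of_mem_sf {χ χ' : F Ap} (h : χ ∈ sf χ') : BGF χ ⊆ BGF χ' :=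
  Finset.biUnion_subset_biUnion_of_subset_left _ fun _ hσ => sf_trans hσ h

lemma GFf_mem_BGF_untl (a b : F Ap) : GFf b ∈ BGF (F.untl a b) :=
  Finset.mem_biUnion.2 ⟨_, mem_sf_self _, Finset.mem_singleton_self _⟩

lemma GFf_mem_BGF_srel (a b : F Ap) : GFf a ∈ BGF (F.srel a b) :=
  Finset.mem_biUnion.2 ⟨_, mem_sf_self _, Finset.mem_singleton_self _⟩

lemma exists_eq_GFf_of_mem_BGF {e χ : F Ap} (h : e ∈ BGF χ) :
    ∃ b, e = GFf b ∧ b ∈ sf χ := by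
  obtain ⟨σ, hσ, he⟩ := Finset.mem_biUnion.1 h
  cases σ <;> simp only [Finset.mem_singleton, Finset.notMem_empty] at he <;> subst he
  · exact ⟨_, rfl, sf_trans (by simp [sf, mem_sf_self]) hσ⟩
  · exact ⟨_, rfl, sf_trans (by simp [sf, mem_sf_self]) hσ⟩

lemma mem_sf_of_FGf_mem_BFG {φ ψ : F Ap} (h : FGf ψ ∈ BFG φ) : ψ ∈ sf φ := by
  obtain ⟨σ, hσ, hψ⟩ := Finset.mem_biUnion.1 h
  cases σ <;> simp [FGf, Gf, Ff] at hψ <;> subst hψ <;>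
    exact sf_trans (by simp [sf, mem_sf_self]) hσ

lemma BGF_subset_down {φ ψ : F Ap} (h : ψ ∈ sf φ) : BGF ψ ⊆ down φ ψ := by
  intro e he
  obtain ⟨b, rfl, hb⟩ := exists_eq_GFf_of_mem_BGF he
  exact Finset.mem_filter.2
    ⟨Finset.mem_union_left _ (BGF_subset_of_mem_sf h he), hb⟩

lemma eval_piC_one (C : Finset (F Ap)) (χ : F Ap) : PiC Ap 1 (eval C χ) := by
  induction χ with
  | tt => exact PiC.tt 1
  | ff => exact PiC.ff 1
  | pos a => exact PiC.pos 1 a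
  | nlit a => exact PiC.nlit 1 a
  | and _ _ iha ihb => exact PiC.and iha ihb
  | or _ _ iha ihb => exact PiC.or iha ihb
  | next _ iha => exact PiC.next iha
  | wuntl _ _ iha ihb => exact PiC.wuntl iha ihb
  | rel _ _ iha ihb => exact PiC.rel iha ihb
  | untl _ b iha ihb =>
    by_cases hb : GFf b ∈ C
    · simpa only [eval, if_pos hb] using PiC.wuntl iha ihb
    · simpa only [eval, if_neg hb] using PiC.ff 1
  | srel a _ iha ihb =>
    by_cases ha : GFf a ∈ C
    · simpa only [eval, if_pos ha] using PiC.rel iha ihb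
    · simpa only [eval, if_neg ha] using PiC.ff 1

lemma entails_eval_of_subset {C C' : Finset (F Ap)} (h : C ⊆ C') (χ : F Ap) :
    Entails (eval C χ) (eval C' χ) := by
  induction χ with
  | tt | ff | pos | nlit => exact fun _ => id
  | and _ _ iha ihb => exact fun w => And.imp (iha w) (ihb w)
  | or _ _ iha ihb => exact fun w => Or.imp (iha w) (ihb w)
  | next _ iha => exact fun w => iha _
  | wuntl _ _ iha ihb => exact iha.wuntl ihb
  | rel _ _ iha ihb => exact iha.rel ihb
  | untl _ b iha ihb =>
    by_cases hb : GFf b ∈ C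
    · simpa only [eval, if_pos hb, if_pos (h hb)] using iha.wuntl ihb
    · simp only [eval, if_neg hb]
      exact fun _ => False.elim
  | srel a _ iha ihb =>
    by_cases ha : GFf a ∈ C
    · simpa only [eval, if_pos ha, if_pos (h ha)] using iha.rel ihb
    · simp only [eval, if_neg ha]
      exact fun _ => False.elim

lemma sat_eval_iff {C : Finset (F Ap)} {S : Set (Word Ap)}
    (hS : ∀ v ∈ S, ∀ k, suff v k ∈ S)
    (hC : ∀ b, GFf b ∈ C → ∀ v ∈ S, Sat v (Ff b))
    {χ : F Ap} (hB : ∀ b, GFf b ∈ BGF χ \ C → ∀ v ∈ S, ¬ Sat v b) :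
    ∀ v ∈ S, (Sat v (eval C χ) ↔ Sat v χ) := by
  have restrict : ∀ {χ₁ χ₂ : F Ap}, χ₁ ∈ sf χ₂ →
      (∀ b, GFf b ∈ BGF χ₂ \ C → ∀ v ∈ S, ¬ Sat v b) →
      ∀ b, GFf b ∈ BGF χ₁ \ C → ∀ v ∈ S, ¬ Sat v b :=
    fun h hB b hb => hB b (Finset.sdiff_subset_sdiff (BGF_subset_of_mem_sf h) subset_rfl hb)
  induction χ with
  | tt | ff | pos | nlit => exact fun _ _ => Iff.rfl
  | and a b iha ihb | or a b iha ihb | wuntl a b iha ihb | rel a b iha ihb =>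
    have ha := iha (restrict (by simp [sf, mem_sf_self]) hB)
    have hb := ihb (restrict (by simp [sf, mem_sf_self]) hB)
    intro v hv
    simp only [eval, Sat, ha _ (hS v hv _), hb _ (hS v hv _), ha v hv, hb v hv]
  | next a iha =>
    have ha := iha (restrict (by simp [sf, mem_sf_self]) hB)
    exact fun v hv => ha _ (hS v hv 1)
  | untl a b iha ihb =>
    have ha := iha (restrict (by simp [sf, mem_sf_self]) hB)
    have hb := ihb (restrict (by simp [sf, mem_sf_self]) hB)
    intro v hv
    by_cases hbC : GFf b ∈ C
    · rw [sat_untl_iff_wuntl (hC b hbC v hv)]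
      simp only [eval, if_pos hbC, Sat, ha _ (hS v hv _), hb _ (hS v hv _)]
    · simp only [eval, if_neg hbC, Sat, false_iff, not_exists, not_and]
      exact fun k hk _ => hB b (Finset.mem_sdiff.2 ⟨GFf_mem_BGF_untl a b, hbC⟩) _ (hS v hv k) hk
  | srel a b iha ihb =>
    have ha := iha (restrict (by simp [sf, mem_sf_self]) hB)
    have hb := ihb (restrict (by simp [sf, mem_sf_self]) hB)
    intro v hv
    by_cases haC : GFf a ∈ C
    · rw [sat_srel_iff_rel (hC a haC v hv)]
      simp only [eval, if_pos haC, Sat, ha _ (hS v hv _), hb _ (hS v hv _)]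
    · simp only [eval, if_neg haC, Sat, false_iff, not_exists, not_and]
      exact fun k hk _ => hB a (Finset.mem_sdiff.2 ⟨GFf_mem_BGF_srel a b, haC⟩) _ (hS v hv k) hk

lemma equivUnder_FGf_eval {B C : Finset (F Ap)} {χ : F Ap} (h : BGF χ ⊆ B) :
    EquivUnder B C (FGf χ) (FGf (eval C χ)) := by
  rintro w ⟨hCw, hBw⟩
  have hlast : ∀ᶠ i in atTop, ∀ e ∈ BGF χ \ C, ¬ Sat (suff w i) (innerArg e) := by
    refine (eventually_all_finset _).2 fun e he => ?_
    obtain ⟨heB, heC⟩ := Finset.mem_sdiff.1 he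
    obtain ⟨b, rfl, -⟩ := exists_eq_GFf_of_mem_BGF heB
    exact not_frequently.1 ((sat_GFf_iff_frequently w b).not.1 (hBw _ (h heB) heC))
  obtain ⟨N, hN⟩ := eventually_atTop.1 hlast
  let S : Set (Word Ap) := {v | ∃ i ≥ N, suff w i = v}
  have hS : ∀ v ∈ S, ∀ k, suff v k ∈ S := by
    rintro _ ⟨i, hi, rfl⟩ k
    exact ⟨k + i, le_add_left hi, (suff_suff w i k).symm⟩
  have hC : ∀ b, GFf b ∈ C → ∀ v ∈ S, Sat v (Ff b) := by
    rintro b hb _ ⟨i, -, rfl⟩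
    exact (sat_Gf w _).1 (hCw _ hb) i
  have hχ := sat_eval_iff hS hC fun b hb _ ⟨i, hi, hv⟩ => hv ▸ hN i hi (GFf b) hb
  rw [sat_FGf_iff_eventually, sat_FGf_iff_eventually]
  exact eventually_congr ((eventually_ge_atTop N).mono fun i hi => (hχ _ ⟨i, hi, rfl⟩).symm)

/-- properties of `FG(eval(ψ,C))` for a basis formula
`FG ψ ∈ B_FG(φ)`. -/
theorem eval_main_lemma {Ap : Type} [Fintype Ap] [DecidableEq Ap]
    (φ ψ : F Ap) (hψ : FGf ψ ∈ BFG φ) :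
    ∀ C ⊆ down φ ψ,
      (PiC Ap 1 (eval C ψ) ∧ DeltaC Ap 2 (FGf (eval C ψ))) ∧
      EquivUnder (down φ ψ) C (FGf ψ) (FGf (eval C ψ)) ∧
      (∀ C' : Finset (F Ap), C ⊆ C' → C' ⊆ down φ ψ →
        Entails (FGf (eval C ψ)) (FGf (eval C' ψ))) := fun C _ =>
  ⟨⟨eval_piC_one C ψ, FGf_deltaC_two (eval_piC_one C ψ)⟩,
    equivUnder_FGf_eval (BGF_subset_down (mem_sf_of_FGf_mem_BFG hψ)),
    fun _ hCC' _ => (entails_eval_of_subset hCC' ψ).FGf⟩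

end LTLNorm
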